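/- For all a ≠ b in {1,2,3} and every p ∈ ℂⁿ × ℂⁿ, the gradients of the norm-squares of the three hyperkähler moment maps are orthogonal: Re⟪∇f_a(p), ∇f_b(p)⟫ = 0. -/

import Mathlib

/-!
Writing `μ_a(p)` in an orthonormal basis `eᵢ` of `𝔨`, `f_a = ∑ᵢ ⟪μ_a, eᵢ⟫²` and each coefficient is,
up to a constant, the quadratic form `q ↦ ½ ⟪I_a (eᵢ · q), q⟫` of the self-adjoint operator
`I_a ∘ eᵢ` (a product of commuting skew-adjoint operators). Hence `∇f_a(p) = 2 I_a (μ_a(p) · p)`.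

For `a ≠ b` put `S = μ_a(p)·`, `T = μ_b(p)·`. Then `⟪I_a S p, I_b T p⟫ = ⟪(I_b I_a)(T S) p, p⟫`.
Distinct complex structures anticommute, so `I_b I_a` is skew-adjoint; it commutes with the
self-adjoint `T S` because `𝔨` is abelian and its action commutes with all three structures.
The operator is therefore skew-adjoint and its real quadratic form vanishes.
-/

open scoped Matrix

noncomputable section

/-- `T*ℂⁿ = ℂⁿ × ℂⁿ` with its L² (Hermitian) norm. -/
abbrev HypPhase (n : ℕ) := WithLp 2 (EuclideanSpace ℂ (Fin n) × EuclideanSpace ℂ (Fin n))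

/-- Build a point of `T*ℂⁿ` from its two components. -/
def mkP {n : ℕ} (a b : EuclideanSpace ℂ (Fin n)) : HypPhase n :=
  (WithLp.equiv 2 (EuclideanSpace ℂ (Fin n) × EuclideanSpace ℂ (Fin n))).symm (a, b)

/-- Matrix-vector multiplication, viewed as a map on Euclidean space. -/
def mulVecE {n : ℕ} (ξ : Matrix (Fin n) (Fin n) ℂ) (x : EuclideanSpace ℂ (Fin n)) :
    EuclideanSpace ℂ (Fin n) :=
  (WithLp.equiv 2 (Fin n → ℂ)).symm (ξ.mulVec (WithLp.equiv 2 (Fin n → ℂ) x))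

/-- Entrywise complex conjugation on `ℂⁿ`. -/
def conjE {n : ℕ} (x : EuclideanSpace ℂ (Fin n)) : EuclideanSpace ℂ (Fin n) :=
  (WithLp.equiv 2 (Fin n → ℂ)).symm (star (WithLp.equiv 2 (Fin n → ℂ) x))

/-- The action of `𝔨` on `T*ℂⁿ`: `ξ · (x, y) = (ξ x, ξ̄ y)`. -/
def act {n : ℕ} (ξ : Matrix (Fin n) (Fin n) ℂ) (p : HypPhase n) : HypPhase n :=
  mkP (mulVecE ξ p.ofLp.1) (mulVecE (ξ.map (starRingEnd ℂ)) p.ofLp.2)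

/-- The real Frobenius inner product `⟪ξ,η⟫ = Re (tr (ξᴴ η))` on complex matrices. -/
def innK {n : ℕ} (ξ η : Matrix (Fin n) (Fin n) ℂ) : ℝ :=
  (Matrix.trace (ξᴴ * η)).re

section SkewAdjoint

variable {R : Type*} [Ring R] [StarRing R] {a b : R}

theorem isSelfAdjoint_mul_of_mem_skewAdjoint (ha : a ∈ skewAdjoint R) (hb : b ∈ skewAdjoint R)
    (hab : Commute a b) : IsSelfAdjoint (a * b) := by
  rw [IsSelfAdjoint, star_mul, skewAdjoint.mem_iff.mp ha, skewAdjoint.mem_iff.mp hb, neg_mul_neg,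
    hab.eq]

theorem mul_mem_skewAdjoint_of_anticommute (ha : a ∈ skewAdjoint R) (hb : b ∈ skewAdjoint R)
    (hab : a * b = -(b * a)) : a * b ∈ skewAdjoint R := by
  rw [skewAdjoint.mem_iff, star_mul, skewAdjoint.mem_iff.mp ha, skewAdjoint.mem_iff.mp hb,
    neg_mul_neg, hab, neg_neg]

theorem mul_mem_skewAdjoint_of_isSelfAdjoint (ha : a ∈ skewAdjoint R) (hb : IsSelfAdjoint b)
    (hab : Commute a b) : a * b ∈ skewAdjoint R := by
  rw [skewAdjoint.mem_iff, star_mul, skewAdjoint.mem_iff.mp ha, hb.star_eq, mul_neg, hab.eq]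

end SkewAdjoint

theorem quaternion_anticommute {R : Type*} [Ring R] {i j : R} (hi : i * i = -1) (hj : j * j = -1)
    (hij : i * j = -(j * i)) {a b : Fin 3} (hab : a ≠ b) :
    ![i, j, i * j] a * ![i, j, i * j] b = -(![i, j, i * j] b * ![i, j, i * j] a) := by
  have hji : j * i = -(i * j) := by rw [hij, neg_neg]
  have hiij : i * (i * j) = -j := by rw [← mul_assoc, hi, neg_one_mul]
  have hiji : i * j * i = j := by
    rw [mul_assoc, hji, mul_neg, ← mul_assoc, hi, neg_one_mul, neg_neg]
  have hjij : j * (i * j) = i := by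
    rw [← mul_assoc, hji, neg_mul, mul_assoc, hj, mul_neg_one, neg_neg]
  have hijj : i * j * j = -i := by rw [mul_assoc, hj, mul_neg_one]
  fin_cases a <;> fin_cases b <;> simp_all

section RealHilbert

variable {V : Type*} [NormedAddCommGroup V] [InnerProductSpace ℝ V] [CompleteSpace V]

open ContinuousLinearMap

theorem real_inner_apply_self_eq_zero_of_mem_skewAdjoint {X : V →L[ℝ] V}
    (hX : X ∈ skewAdjoint (V →L[ℝ] V)) (p : V) : inner ℝ (X p) p = 0 := by
  have h : inner ℝ (X p) p = inner ℝ p (star X p) := by rw [star_eq_adjoint, adjoint_inner_right]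
  rw [skewAdjoint.mem_iff.mp hX, neg_apply, inner_neg_right] at h
  linarith [real_inner_comm (X p) p]

theorem mem_skewAdjoint_of_mul_self_eq_neg_one {J : V →L[ℝ] V}
    (hJ : ∀ u v, inner ℝ (J u) (J v) = inner ℝ u v) (hJJ : J * J = -1) :
    J ∈ skewAdjoint (V →L[ℝ] V) := by
  rw [skewAdjoint.mem_iff, star_eq_adjoint]
  refine ((eq_adjoint_iff (-J) J).mpr fun u v => ?_).symm
  rw [← hJ u (J v), ← mul_apply_eq_comp, hJJ]
  simp [inner_neg_right]

theorem real_inner_apply_apply_eq_zero_of_anticommute {J J' S T : V →L[ℝ] V}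
    (hJ : J ∈ skewAdjoint (V →L[ℝ] V)) (hJ' : J' ∈ skewAdjoint (V →L[ℝ] V))
    (hS : S ∈ skewAdjoint (V →L[ℝ] V)) (hT : T ∈ skewAdjoint (V →L[ℝ] V))
    (hJJ' : J * J' = -(J' * J)) (hST : Commute S T) (hJS : Commute J S) (hJT : Commute J T)
    (hJ'S : Commute J' S) (hJ'T : Commute J' T) (p : V) :
    inner ℝ (J (S p)) (J' (T p)) = 0 := by
  have hX : star (J' * T) * (J * S) = J' * J * (T * S) := by
    rw [star_mul, skewAdjoint.mem_iff.mp hT, skewAdjoint.mem_iff.mp hJ', neg_mul_neg,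
      ← hJ'T.eq, mul_assoc, ← mul_assoc T, ← hJT.eq]
    simp only [mul_assoc]
  have hJ'J : J' * J ∈ skewAdjoint (V →L[ℝ] V) :=
    mul_mem_skewAdjoint_of_anticommute hJ' hJ (by rw [hJJ', neg_neg])
  change inner ℝ ((J * S) p) ((J' * T) p) = 0
  rw [← adjoint_inner_left, ← star_eq_adjoint, ← mul_apply_eq_comp, hX]
  exact real_inner_apply_self_eq_zero_of_mem_skewAdjoint
    (mul_mem_skewAdjoint_of_isSelfAdjoint hJ'J (isSelfAdjoint_mul_of_mem_skewAdjoint hT hS hST.symm)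
      ((hJ'T.mul_left hJT).mul_right (hJ'S.mul_left hJS))) p

theorem hasFDerivAt_half_inner_apply_self {L : V →L[ℝ] V} (hL : IsSelfAdjoint L) (p : V) :
    HasFDerivAt (fun q => 1 / 2 * inner ℝ (L q) q) (innerSL ℝ (L p)) p := by
  refine ((hL.isSymmetric.hasStrictFDerivAt_reApplyInnerSelf p).hasFDerivAt.const_mul
    (1 / 2)).congr_fderiv ?_
  ext v
  simp

variable {K : Type*} [NormedAddCommGroup K] [InnerProductSpace ℝ K] [FiniteDimensional ℝ K]

theorem hasGradientAt_norm_sq_of_inner_eq (A : K →ₗ[ℝ] V →L[ℝ] V) (hA : ∀ ξ, IsSelfAdjoint (A ξ))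
    (m : V → K) (r : K → ℝ) (hm : ∀ q ξ, inner ℝ (m q) ξ = 1 / 2 * inner ℝ (A ξ q) q - r ξ)
    (p : V) : HasGradientAt (fun q => ‖m q‖ ^ 2) ((2 : ℝ) • A (m p) p) p := by
  let b := stdOrthonormalBasis ℝ K
  have hcoord (i) : HasFDerivAt (fun q => inner ℝ (m q) (b i)) (innerSL ℝ (A (b i) p)) p := by
    simp only [hm]
    exact (hasFDerivAt_half_inner_apply_self (hA (b i)) p).sub_const _
  have hparseval : (fun q => ‖m q‖ ^ 2) = fun q => ∑ i, inner ℝ (m q) (b i) ^ 2 := by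
    ext q
    rw [← real_inner_self_eq_norm_sq, ← b.sum_inner_mul_inner]
    simp only [sq, real_inner_comm (m q)]
  rw [hasGradientAt_iff_hasFDerivAt, hparseval]
  refine (HasFDerivAt.fun_sum fun i _ => (hcoord i).pow 2).congr_fderiv ?_
  ext v
  conv_rhs => rw [← b.sum_repr' (m p)]
  simp [map_sum, Finset.mul_sum, real_inner_comm (m p), mul_assoc]

end RealHilbert

section Frobenius

open ComplexOrder

variable {n : ℕ}

theorem innK_comm (ξ η : Matrix (Fin n) (Fin n) ℂ) : innK ξ η = innK η ξ := by
  rw [innK, innK, ← Complex.conj_re, starRingEnd_apply, ← Matrix.trace_conjTranspose,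
    Matrix.conjTranspose_mul, Matrix.conjTranspose_conjTranspose]

theorem trace_conjTranspose_mul_self_nonneg (ξ : Matrix (Fin n) (Fin n) ℂ) :
    0 ≤ (ξᴴ * ξ).trace :=
  (Matrix.posSemidef_conjTranspose_mul_self ξ).trace_nonneg

@[reducible] def innKCore : InnerProductSpace.Core ℝ (Matrix (Fin n) (Fin n) ℂ) where
  inner := innK
  conj_inner_symm ξ η := innK_comm η ξ
  re_inner_nonneg ξ := (Complex.nonneg_iff.mp (trace_conjTranspose_mul_self_nonneg ξ)).1
  add_left ξ η ζ := by simp [innK, Matrix.conjTranspose_add, add_mul]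
  smul_left ξ η r := by simp [innK]
  definite ξ h := by
    rw [← Matrix.trace_conjTranspose_mul_self_eq_zero_iff]
    exact Complex.ext h (Complex.nonneg_iff.mp (trace_conjTranspose_mul_self_nonneg ξ)).2.symm

end Frobenius

open ComplexConjugate

/-- The real inner product that instance search finds on `EuclideanSpace ℂ ι` is the sum of the
real inner products of the coordinates; it agrees with `Re ⟪x, y⟫_ℂ` only propositionally. -/
theorem EuclideanSpace.re_inner_eq_real_inner {ι : Type*} [Fintype ι]
    (x y : EuclideanSpace ℂ ι) : (inner ℂ x y).re = inner ℝ x y := by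
  simp only [PiLp.inner_apply, Complex.re_sum, Complex.inner, RCLike.inner_apply]

section Euclidean

variable {ι κ : Type*} [Fintype κ] [DecidableEq κ]

theorem Matrix.toEuclideanLin_real_smul_apply (r : ℝ) (ξ : Matrix ι κ ℂ)
    (x : EuclideanSpace ℂ κ) : (r • ξ).toEuclideanLin x = r • ξ.toEuclideanLin x := by
  rw [RCLike.real_smul_eq_coe_smul (K := ℂ) r ξ, map_smul, LinearMap.smul_apply,
    ← RCLike.real_smul_eq_coe_smul]

theorem Matrix.real_inner_toEuclideanLin_conjTranspose [Fintype ι] [DecidableEq ι]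
    (ξ : Matrix ι κ ℂ) (x : EuclideanSpace ℂ ι) (y : EuclideanSpace ℂ κ) :
    inner ℝ (ξᴴ.toEuclideanLin x) y = inner ℝ x (ξ.toEuclideanLin y) := by
  have h : inner ℂ (ξᴴ.toEuclideanLin x) y = inner ℂ x (ξ.toEuclideanLin y) := by
    rw [Matrix.toEuclideanLin_conjTranspose_eq_adjoint, LinearMap.adjoint_inner_left]
  rw [← EuclideanSpace.re_inner_eq_real_inner, h, EuclideanSpace.re_inner_eq_real_inner]

end Euclidean

section ConjE

variable {n : ℕ}

@[simp] theorem conjE_apply (x : EuclideanSpace ℂ (Fin n)) (i : Fin n) :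
    conjE x i = conj (x i) := rfl

theorem conjE_toEuclideanLin (ξ : Matrix (Fin n) (Fin n) ℂ) (x : EuclideanSpace ℂ (Fin n)) :
    conjE (ξ.toEuclideanLin x) = (ξ.map conj).toEuclideanLin (conjE x) := by
  ext i
  simp [Matrix.mulVec, dotProduct]

theorem real_inner_conjE_conjE (x y : EuclideanSpace ℂ (Fin n)) :
    inner ℝ (conjE x) (conjE y) = inner ℝ x y :=
  (LinearIsometryEquiv.piLpCongrRight 2 fun _ => Complex.conjLIE).inner_map_map x y

end ConjE

namespace HypPhase

variable {n : ℕ}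

local notation "M" => Matrix (Fin n) (Fin n) ℂ

@[ext] theorem ext {p q : HypPhase n} (h₁ : p.fst = q.fst) (h₂ : p.snd = q.snd) : p = q :=
  WithLp.ofLp_injective 2 (Prod.ext h₁ h₂)

@[simp] theorem mkP_fst (x y : EuclideanSpace ℂ (Fin n)) : (mkP x y).fst = x := rfl

@[simp] theorem mkP_snd (x y : EuclideanSpace ℂ (Fin n)) : (mkP x y).snd = y := rfl

theorem re_inner_eq_real_inner (p q : HypPhase n) : (inner ℂ p q).re = inner ℝ p q := by
  simp only [WithLp.prod_inner_apply, Complex.add_re, EuclideanSpace.re_inner_eq_real_inner]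

@[simp] theorem act_fst (ξ : M) (p : HypPhase n) : (act ξ p).fst = ξ.toEuclideanLin p.fst := rfl

@[simp] theorem act_snd (ξ : M) (p : HypPhase n) :
    (act ξ p).snd = (ξ.map conj).toEuclideanLin p.snd := rfl

def actCLM : M →ₗ[ℝ] HypPhase n →L[ℝ] HypPhase n where
  toFun ξ := LinearMap.toContinuousLinearMap
    { toFun := act ξ
      map_add' p q := ext (by simp) (by simp)
      map_smul' r p := ext (by simp) (by simp) }
  map_add' ξ η := by ext p <;> simp [Matrix.map_add]
  map_smul' r ξ := by
    have : (r • ξ).map conj = r • ξ.map conj := by ext; simp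
    ext1 p; ext1 <;> simp [this, Matrix.toEuclideanLin_real_smul_apply]

@[simp] theorem actCLM_apply (ξ : M) (p : HypPhase n) : actCLM ξ p = act ξ p := rfl

theorem actCLM_mul (ξ η : M) : actCLM (ξ * η) = actCLM ξ * actCLM η := by
  ext1 p; ext1 <;> simp [Matrix.map_mul]

theorem commute_actCLM {ξ η : M} (h : Commute ξ η) : Commute (actCLM ξ) (actCLM η) := by
  rw [Commute, SemiconjBy, ← actCLM_mul, ← actCLM_mul, h.eq]

theorem star_actCLM (ξ : M) : star (actCLM ξ) = actCLM ξᴴ := by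
  rw [ContinuousLinearMap.star_eq_adjoint, eq_comm, ContinuousLinearMap.eq_adjoint_iff]
  intro p q
  have : ξᴴ.map conj = (ξ.map conj)ᴴ := Matrix.conjTranspose_map _ fun _ => rfl
  simp [WithLp.prod_inner_apply, this, Matrix.real_inner_toEuclideanLin_conjTranspose]

theorem actCLM_mem_skewAdjoint {ξ : M} (hξ : ξᴴ = -ξ) : actCLM ξ ∈ skewAdjoint _ := by
  rw [skewAdjoint.mem_iff, star_actCLM, hξ, map_neg]

def mulI : HypPhase n →L[ℝ] HypPhase n := Complex.I • 1

def quatJ : HypPhase n →L[ℝ] HypPhase n := LinearMap.toContinuousLinearMap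
  { toFun p := mkP (-conjE p.snd) (conjE p.fst)
    map_add' p q := by ext <;> simp [add_comm]
    map_smul' r p := by ext <;> simp }

@[simp] theorem mulI_apply (p : HypPhase n) : mulI p = Complex.I • p := by simp [mulI]

@[simp] theorem quatJ_apply_fst (p : HypPhase n) : (quatJ p).fst = -conjE p.snd := rfl

@[simp] theorem quatJ_apply_snd (p : HypPhase n) : (quatJ p).snd = conjE p.fst := rfl

theorem mulI_mul_mulI : mulI * mulI = (-1 : HypPhase n →L[ℝ] HypPhase n) := by
  ext1 p
  simp [smul_smul]

theorem quatJ_mul_quatJ : quatJ * quatJ = (-1 : HypPhase n →L[ℝ] HypPhase n) := by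
  ext <;> simp

theorem mulI_mul_quatJ : mulI * quatJ = -(quatJ * mulI : HypPhase n →L[ℝ] HypPhase n) := by
  ext <;> simp

theorem real_inner_mulI_mulI (p q : HypPhase n) : inner ℝ (mulI p) (mulI q) = inner ℝ p q := by
  rw [← re_inner_eq_real_inner, ← re_inner_eq_real_inner, mulI_apply, mulI_apply, inner_smul_left,
    inner_smul_right, ← mul_assoc, Complex.conj_I, neg_mul, Complex.I_mul_I, neg_neg, one_mul]

theorem real_inner_quatJ_quatJ (p q : HypPhase n) :
    inner ℝ (quatJ p) (quatJ q) = inner ℝ p q := by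
  simp [WithLp.prod_inner_apply, real_inner_conjE_conjE, add_comm]

theorem commute_mulI_actCLM (ξ : M) : Commute mulI (actCLM ξ) := by
  ext <;> simp

theorem commute_quatJ_actCLM (ξ : M) : Commute quatJ (actCLM ξ) := by
  ext1 p; ext1 <;> simp [conjE_toEuclideanLin, Function.comp_def]

def complexStructure : Fin 3 → HypPhase n →L[ℝ] HypPhase n := ![mulI, quatJ, mulI * quatJ]

theorem complexStructure_mem_skewAdjoint (a : Fin 3) :
    complexStructure (n := n) a ∈ skewAdjoint _ := by
  have hI := mem_skewAdjoint_of_mul_self_eq_neg_one (real_inner_mulI_mulI (n := n)) mulI_mul_mulI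
  have hJ :=
    mem_skewAdjoint_of_mul_self_eq_neg_one (real_inner_quatJ_quatJ (n := n)) quatJ_mul_quatJ
  fin_cases a
  exacts [hI, hJ, mul_mem_skewAdjoint_of_anticommute hI hJ mulI_mul_quatJ]

theorem commute_complexStructure_actCLM (a : Fin 3) (ξ : M) :
    Commute (complexStructure a) (actCLM ξ) := by
  fin_cases a
  exacts [commute_mulI_actCLM ξ, commute_quatJ_actCLM ξ,
    (commute_mulI_actCLM ξ).mul_left (commute_quatJ_actCLM ξ)]

theorem complexStructure_anticommute {a b : Fin 3} (hab : a ≠ b) :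
    complexStructure (n := n) a * complexStructure b = -(complexStructure b * complexStructure a) :=
  quaternion_anticommute mulI_mul_mulI quatJ_mul_quatJ mulI_mul_quatJ hab

theorem hasGradientAt_innK_self (𝔨 : Submodule ℝ M) (hskew : ∀ ξ ∈ 𝔨, ξᴴ = -ξ)
    {J : HypPhase n →L[ℝ] HypPhase n} (hJ : J ∈ skewAdjoint (HypPhase n →L[ℝ] HypPhase n))
    (hJact : ∀ ξ, Commute J (actCLM ξ)) (μ : HypPhase n → M) (hμmem : ∀ p, μ p ∈ 𝔨) (α : M)
    (hμ : ∀ p, ∀ ξ ∈ 𝔨, innK (μ p) ξ = 1 / 2 * (inner ℂ (J (act ξ p)) p).re - innK α ξ)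
    (p : HypPhase n) :
    HasGradientAt (fun q => innK (μ q) (μ q)) ((2 : ℝ) • J (act (μ p) p)) p := by
  let : NormedAddCommGroup M := innKCore.toNormedAddCommGroup
  let : InnerProductSpace ℝ M := .ofCore innKCore.toCore
  have h := hasGradientAt_norm_sq_of_inner_eq (K := 𝔨)
    ((ContinuousLinearMap.compL ℝ _ _ _ J).toLinearMap ∘ₗ actCLM ∘ₗ 𝔨.subtype)
    (fun ξ => isSelfAdjoint_mul_of_mem_skewAdjoint hJ (actCLM_mem_skewAdjoint (hskew ξ ξ.2))
      (hJact ξ))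
    (fun q => ⟨μ q, hμmem q⟩) (fun ξ => innK α ξ)
    (fun q ξ => by rw [← re_inner_eq_real_inner]; exact hμ q ξ ξ.2) p
  simp only [← real_inner_self_eq_norm_sq] at h
  exact h

end HypPhase

open HypPhase

theorem stmt6_general (n : ℕ) (𝔨 : Submodule ℝ (Matrix (Fin n) (Fin n) ℂ))
    (hskew : ∀ ξ ∈ 𝔨, ξᴴ = -ξ)
    (habelian : ∀ ξ ∈ 𝔨, ∀ η ∈ 𝔨, ξ * η = η * ξ)
    -- the three complex structures on `T*ℂⁿ`
    (I : Fin 3 → HypPhase n → HypPhase n)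
    (hI1 : I 0 = fun p => Complex.I • p)
    (hI2 : I 1 = fun p => mkP (-(conjE p.ofLp.2)) (conjE p.ofLp.1))
    (hI3 : I 2 = (I 0) ∘ (I 1))
    -- the three moment maps
    (α : Fin 3 → Matrix (Fin n) (Fin n) ℂ)
    (μ : Fin 3 → HypPhase n → Matrix (Fin n) (Fin n) ℂ)
    (hμmem : ∀ a p, μ a p ∈ 𝔨)
    (hμ : ∀ a, ∀ p : HypPhase n, ∀ ξ ∈ 𝔨,
      innK (μ a p) ξ = (1/2) * (inner ℂ (I a (act ξ p)) p : ℂ).re - innK (α a) ξ)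
    -- their norm-squares
    (f : Fin 3 → HypPhase n → ℝ) (hf : ∀ a p, f a p = innK (μ a p) (μ a p)) :
    ∀ a b : Fin 3, a ≠ b → ∀ p : HypPhase n,
      (inner ℂ (gradient (f a) p) (gradient (f b) p) : ℂ).re = 0 := by
  intro a b hab p
  have hI : ∀ c, I c = complexStructure c := by
    have h0 : I 0 = mulI := by rw [hI1]; funext q; simp
    have h1 : I 1 = quatJ := hI2
    intro c
    match c with
    | 0 => exact h0
    | 1 => exact h1
    | 2 => rw [hI3, h0, h1]; rfl
  have hgrad : ∀ c, gradient (f c) p = (2 : ℝ) • complexStructure c (act (μ c p) p) := by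
    intro c
    rw [show f c = _ from funext (hf c)]
    refine (hasGradientAt_innK_self 𝔨 hskew (complexStructure_mem_skewAdjoint c)
      (commute_complexStructure_actCLM c) (μ c) (hμmem c) (α c) (fun q ξ hξ => ?_) p).gradient
    rw [hμ c q ξ hξ, hI]
  have hJ := complexStructure_mem_skewAdjoint (n := n)
  have hJact := commute_complexStructure_actCLM (n := n)
  rw [re_inner_eq_real_inner, hgrad a, hgrad b, real_inner_smul_left, real_inner_smul_right,
    ← actCLM_apply, ← actCLM_apply,
    real_inner_apply_apply_eq_zero_of_anticommute (hJ a) (hJ b)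
      (actCLM_mem_skewAdjoint (hskew _ (hμmem a p))) (actCLM_mem_skewAdjoint (hskew _ (hμmem b p)))
      (complexStructure_anticommute hab) (commute_actCLM (habelian _ (hμmem a p) _ (hμmem b p)))
      (hJact a _) (hJact a _) (hJact b _) (hJact b _),
    mul_zero, mul_zero]

/-- For an abelian `𝔨`, the gradients of the norm-squares of the three
hyperkähler moment maps on `T*ℂⁿ` are pairwise orthogonal. -/
theorem stmt6 (n : ℕ) (𝔨 : Submodule ℝ (Matrix (Fin n) (Fin n) ℂ))
    (hskew : ∀ ξ ∈ 𝔨, ξᴴ = -ξ)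
    (habelian : ∀ ξ ∈ 𝔨, ∀ η ∈ 𝔨, ξ * η = η * ξ)
    -- the three complex structures on `T*ℂⁿ`
    (I : Fin 3 → HypPhase n → HypPhase n)
    (hI1 : I 0 = fun p => Complex.I • p)
    (hI2 : I 1 = fun p => mkP (-(conjE p.ofLp.2)) (conjE p.ofLp.1))
    (hI3 : I 2 = (I 0) ∘ (I 1))
    -- the three moment maps
    (α : Fin 3 → Matrix (Fin n) (Fin n) ℂ) (hα : ∀ a, α a ∈ 𝔨)
    (μ : Fin 3 → HypPhase n → Matrix (Fin n) (Fin n) ℂ)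
    (hμmem : ∀ a p, μ a p ∈ 𝔨)
    (hμ : ∀ a, ∀ p : HypPhase n, ∀ ξ ∈ 𝔨,
      innK (μ a p) ξ = (1/2) * (inner ℂ (I a (act ξ p)) p : ℂ).re - innK (α a) ξ)
    -- their norm-squares
    (f : Fin 3 → HypPhase n → ℝ) (hf : ∀ a p, f a p = innK (μ a p) (μ a p)) :
    ∀ a b : Fin 3, a ≠ b → ∀ p : HypPhase n,
      (inner ℂ (gradient (f a) p) (gradient (f b) p) : ℂ).re = 0 :=
  stmt6_general n 𝔨 hskew habelian I hI1 hI2 hI3 α μ hμmem hμ f hf
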